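/- Let H: ℝ^Λ → ℝ, H(x) = Σ p_{ij}(x_i - x_j)² α + (1-α)Σ_i (x_i - d_i)² be the finite-volume harmonic crystal Hamiltonian with boundary values m on Λ^c as in (Hham), where m solves the harmonic equation m(i) = α Σ_k p(i,k) m(k) + (1-α)d(i). Then the restriction m|_Λ is the unique global minimizer of H over ℝ^Λ. -/

import Mathlib

open scoped BigOperators

/-- Sup-norm on `ℤ^d` (as a natural number). -/
def supNorm (D : ℕ) (i : Fin D → ℤ) : ℕ := Finset.univ.sup fun k => (i k).natAbs

/-- the restriction `m|_Λ` of the harmonic function `m` is the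
unique global minimizer of the finite-volume harmonic-crystal Hamiltonian with
boundary values `m` on `Λ^c`.  The pair sum over `i,j ∈ Λ` is over unordered
pairs (hence the factor `α/2` for the sum over ordered pairs, the diagonal
vanishing since `p(i,i)=0`). -/
theorem stmt19 (D R : ℕ) (hR : 0 < R)
    (α : ℝ) (hα0 : 0 < α) (hα1 : α < 1)
    (p : (Fin D → ℤ) → (Fin D → ℤ) → ℝ)
    (hsym : ∀ i j, p i j = p j i)
    (hnn : ∀ i j, 0 ≤ p i j)
    (hstoch : ∀ i, HasSum (p i) 1)
    (hdiag : ∀ i, p i i = 0)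
    (hrange : ∀ i j, R ≤ supNorm D (i - j) → p i j = 0)
    (d m : (Fin D → ℤ) → ℝ)
    (hm : ∀ i, m i = α * ∑' k, p i k * m k + (1 - α) * d i)
    (Λ : Finset (Fin D → ℤ))
    (H : ((Fin D → ℤ) → ℝ) → ℝ)
    (hH : ∀ x, H x =
        α / 2 * ∑ i ∈ Λ, ∑ j ∈ Λ, p i j * (x i - x j) ^ 2
      + α * ∑ i ∈ Λ, (∑' k, if k ∈ Λ then 0 else p i k * (x i - m k) ^ 2)
      + (1 - α) * ∑ i ∈ Λ, (x i - d i) ^ 2) :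
    (∀ x : (Fin D → ℤ) → ℝ, H m ≤ H x) ∧
    (∀ x : (Fin D → ℤ) → ℝ, (∃ i ∈ Λ, x i ≠ m i) → H m < H x) := by
  classical
  -- the box of radius R is finite
  have hbox : {j : Fin D → ℤ | supNorm D j < R}.Finite := by
    have hsub : {j : Fin D → ℤ | supNorm D j < R}
        ⊆ Set.pi Set.univ (fun _ : Fin D => Set.Icc (-(R : ℤ)) R) := by
      intro j hj
      simp only [Set.mem_pi, Set.mem_univ, forall_true_left, Set.mem_Icc]
      intro k
      have h1 : (j k).natAbs ≤ supNorm D j :=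
        Finset.le_sup (f := fun k => (j k).natAbs) (Finset.mem_univ k)
      have h2 : (j k).natAbs < R := lt_of_le_of_lt h1 hj
      omega
    exact (Set.Finite.pi (fun _ => Set.finite_Icc _ _)).subset hsub
  -- each `p i` has finite support
  have hfin : ∀ i : Fin D → ℤ, (Function.support (p i)).Finite := by
    intro i
    have hsub : Function.support (p i)
        ⊆ (fun j => i - j) '' {j : Fin D → ℤ | supNorm D j < R} := by
      intro k hk
      refine ⟨i - k, ?_, by show i - (i - k) = k; rw [sub_sub_cancel]⟩
      by_contra h
      simp only [Set.mem_setOf_eq, not_lt] at h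
      exact hk (hrange i k h)
    exact (hbox.image _).subset hsub
  set F : (Fin D → ℤ) → Finset (Fin D → ℤ) := fun i => (hfin i).toFinset with hF
  have hpF : ∀ i k, k ∉ F i → p i k = 0 := by
    intro i k hk
    by_contra h
    exact hk ((hfin i).mem_toFinset.mpr h)
  have hsum1 : ∀ i, ∑ k ∈ F i, p i k = 1 := by
    intro i
    have := (hstoch i).tsum_eq
    rwa [tsum_eq_sum (s := F i) (fun k hk => hpF i k hk)] at this
  have hts1 : ∀ i, ∑' k, p i k * m k = ∑ k ∈ F i, p i k * m k := fun i =>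
    tsum_eq_sum (fun k hk => by rw [hpF i k hk, zero_mul])
  have hts2 : ∀ (x : (Fin D → ℤ) → ℝ) (i : Fin D → ℤ),
      (∑' k, if k ∈ Λ then 0 else p i k * (x i - m k) ^ 2)
      = ∑ k ∈ F i, if k ∈ Λ then 0 else p i k * (x i - m k) ^ 2 := by
    intro x i
    refine tsum_eq_sum (fun k hk => ?_)
    rw [hpF i k hk]
    split_ifs <;> ring
  -- harmonicity in finite-sum form
  have key : ∀ i, α * ∑ k ∈ F i, p i k * (m i - m k) + (1 - α) * (m i - d i) = 0 := by
    intro i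
    have h1 : ∑ k ∈ F i, p i k * (m i - m k)
        = (∑ k ∈ F i, p i k) * m i - ∑ k ∈ F i, p i k * m k := by
      rw [Finset.sum_mul, ← Finset.sum_sub_distrib]
      exact Finset.sum_congr rfl fun k _ => by ring
    have h2 := hm i
    rw [hts1 i] at h2
    rw [h1, hsum1 i]
    linarith
  -- splitting the full neighbour sum into inside- and outside-Λ parts
  have hsplit : ∀ i, (∑ j ∈ Λ, p i j * (m i - m j))
      + (∑ k ∈ F i, if k ∈ Λ then 0 else p i k * (m i - m k))
      = ∑ k ∈ F i, p i k * (m i - m k) := by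
    intro i
    have e1 : ∑ j ∈ Λ, p i j * (m i - m j)
        = ∑ k ∈ F i, if k ∈ Λ then p i k * (m i - m k) else 0 := by
      rw [Finset.sum_ite_mem]
      refine (Finset.sum_subset Finset.inter_subset_right fun k hk hk2 => ?_).symm
      rw [hpF i k (fun h => hk2 (Finset.mem_inter.mpr ⟨h, hk⟩)), zero_mul]
    rw [e1, ← Finset.sum_add_distrib]
    refine Finset.sum_congr rfl fun k _ => ?_
    split_ifs <;> ring
  -- the main identity: H x = H m + nonnegative quadratic form
  have main : ∀ x : (Fin D → ℤ) → ℝ, H x = H m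
      + (α / 2 * ∑ i ∈ Λ, ∑ j ∈ Λ, p i j * ((x i - m i) - (x j - m j)) ^ 2
      + α * ∑ i ∈ Λ, (∑ k ∈ F i, if k ∈ Λ then 0 else p i k) * (x i - m i) ^ 2
      + (1 - α) * ∑ i ∈ Λ, (x i - m i) ^ 2) := by
    intro x
    rw [hH x, hH m]
    simp only [hts2]
    have lin : α * ∑ i ∈ Λ, (x i - m i) * ∑ j ∈ Λ, p i j * (m i - m j)
        + α * ∑ i ∈ Λ, (x i - m i) * ∑ k ∈ F i, (if k ∈ Λ then 0 else p i k * (m i - m k))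
        + (1 - α) * ∑ i ∈ Λ, (x i - m i) * (m i - d i) = 0 := by
      rw [Finset.mul_sum, Finset.mul_sum, Finset.mul_sum, ← Finset.sum_add_distrib,
        ← Finset.sum_add_distrib]
      refine Finset.sum_eq_zero fun i hi => ?_
      linear_combination (α * (x i - m i)) * hsplit i + (x i - m i) * key i
    have swap : ∑ i ∈ Λ, ∑ j ∈ Λ, p i j * ((m i - m j) * (x j - m j))
        = - ∑ i ∈ Λ, ∑ j ∈ Λ, p i j * ((m i - m j) * (x i - m i)) := by
      rw [Finset.sum_comm, ← Finset.sum_neg_distrib]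
      refine Finset.sum_congr rfl fun a _ => ?_
      rw [← Finset.sum_neg_distrib]
      refine Finset.sum_congr rfl fun b _ => ?_
      rw [hsym a b]; ring
    have e2 : ∀ i, ∑ j ∈ Λ, p i j * ((m i - m j) * (x i - m i))
        = (x i - m i) * ∑ j ∈ Λ, p i j * (m i - m j) := fun i => by
      rw [Finset.mul_sum]; exact Finset.sum_congr rfl fun j _ => by ring
    have c1 : ∑ i ∈ Λ, ∑ j ∈ Λ, p i j * (x i - x j) ^ 2
        = ∑ i ∈ Λ, ∑ j ∈ Λ, p i j * (m i - m j) ^ 2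
        + ∑ i ∈ Λ, ∑ j ∈ Λ, p i j * ((x i - m i) - (x j - m j)) ^ 2
        + 4 * ∑ i ∈ Λ, (x i - m i) * ∑ j ∈ Λ, p i j * (m i - m j) := by
      have e1 : ∑ i ∈ Λ, ∑ j ∈ Λ, p i j * (x i - x j) ^ 2
          = ∑ i ∈ Λ, ∑ j ∈ Λ, (p i j * (m i - m j) ^ 2
            + p i j * ((x i - m i) - (x j - m j)) ^ 2
            + 2 * (p i j * ((m i - m j) * (x i - m i)))
            - 2 * (p i j * ((m i - m j) * (x j - m j)))) :=
        Finset.sum_congr rfl fun i _ => Finset.sum_congr rfl fun j _ => by ring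
      rw [e1]
      simp only [Finset.sum_add_distrib, Finset.sum_sub_distrib, ← Finset.mul_sum]
      simp only [e2] at swap ⊢
      linarith [swap]
    have cB1 : ∀ i, ∑ k ∈ F i, (if k ∈ Λ then 0 else p i k * (x i - m k) ^ 2)
        = ∑ k ∈ F i, (if k ∈ Λ then 0 else p i k * (m i - m k) ^ 2)
        + (∑ k ∈ F i, if k ∈ Λ then 0 else p i k) * (x i - m i) ^ 2
        + 2 * ((x i - m i) * ∑ k ∈ F i, (if k ∈ Λ then 0 else p i k * (m i - m k))) := by
      intro i
      rw [Finset.sum_mul, Finset.mul_sum, Finset.mul_sum, ← Finset.sum_add_distrib,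
        ← Finset.sum_add_distrib]
      refine Finset.sum_congr rfl fun k _ => ?_
      split_ifs <;> ring
    have cB : (∑ i ∈ Λ, ∑ k ∈ F i, (if k ∈ Λ then 0 else p i k * (x i - m k) ^ 2))
        = ∑ i ∈ Λ, ∑ k ∈ F i, (if k ∈ Λ then 0 else p i k * (m i - m k) ^ 2)
        + ∑ i ∈ Λ, (∑ k ∈ F i, if k ∈ Λ then 0 else p i k) * (x i - m i) ^ 2
        + 2 * ∑ i ∈ Λ, (x i - m i) * ∑ k ∈ F i, (if k ∈ Λ then 0 else p i k * (m i - m k)) := by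
      simp only [cB1]
      rw [Finset.sum_add_distrib, Finset.sum_add_distrib, ← Finset.mul_sum]
    have cC : ∑ i ∈ Λ, (x i - d i) ^ 2
        = ∑ i ∈ Λ, (m i - d i) ^ 2 + ∑ i ∈ Λ, (x i - m i) ^ 2
          + 2 * ∑ i ∈ Λ, (x i - m i) * (m i - d i) := by
      rw [Finset.mul_sum, ← Finset.sum_add_distrib, ← Finset.sum_add_distrib]
      exact Finset.sum_congr rfl fun i _ => by ring
    rw [c1, cB, cC]
    linear_combination 2 * lin
  -- nonnegativity of the quadratic form
  have q1 : ∀ x : (Fin D → ℤ) → ℝ,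
      (0:ℝ) ≤ ∑ i ∈ Λ, ∑ j ∈ Λ, p i j * ((x i - m i) - (x j - m j)) ^ 2 :=
    fun x => Finset.sum_nonneg fun i _ => Finset.sum_nonneg fun j _ =>
      mul_nonneg (hnn i j) (sq_nonneg _)
  have q2 : ∀ x : (Fin D → ℤ) → ℝ,
      (0:ℝ) ≤ ∑ i ∈ Λ, (∑ k ∈ F i, if k ∈ Λ then 0 else p i k) * (x i - m i) ^ 2 := by
    intro x
    refine Finset.sum_nonneg fun i _ =>
      mul_nonneg (Finset.sum_nonneg fun k _ => ?_) (sq_nonneg _)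
    split_ifs
    · exact le_refl 0
    · exact hnn i k
  have q3 : ∀ x : (Fin D → ℤ) → ℝ, (0:ℝ) ≤ ∑ i ∈ Λ, (x i - m i) ^ 2 :=
    fun x => Finset.sum_nonneg fun i _ => sq_nonneg _
  constructor
  · intro x
    rw [main x]
    have h1 : 0 ≤ α / 2 * ∑ i ∈ Λ, ∑ j ∈ Λ, p i j * ((x i - m i) - (x j - m j)) ^ 2 :=
      mul_nonneg (by linarith) (q1 x)
    have h2 : 0 ≤ α * ∑ i ∈ Λ, (∑ k ∈ F i, if k ∈ Λ then 0 else p i k) * (x i - m i) ^ 2 :=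
      mul_nonneg (by linarith) (q2 x)
    have h3 : 0 ≤ (1 - α) * ∑ i ∈ Λ, (x i - m i) ^ 2 :=
      mul_nonneg (by linarith) (q3 x)
    linarith
  · rintro x ⟨i0, hi0, hne⟩
    rw [main x]
    have h1 : 0 ≤ α / 2 * ∑ i ∈ Λ, ∑ j ∈ Λ, p i j * ((x i - m i) - (x j - m j)) ^ 2 :=
      mul_nonneg (by linarith) (q1 x)
    have h2 : 0 ≤ α * ∑ i ∈ Λ, (∑ k ∈ F i, if k ∈ Λ then 0 else p i k) * (x i - m i) ^ 2 :=
      mul_nonneg (by linarith) (q2 x)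
    have hy : 0 < (x i0 - m i0) ^ 2 := by
      have : x i0 - m i0 ≠ 0 := sub_ne_zero.mpr hne
      positivity
    have hsum : (x i0 - m i0) ^ 2 ≤ ∑ i ∈ Λ, (x i - m i) ^ 2 :=
      Finset.single_le_sum (f := fun i => (x i - m i) ^ 2) (fun i _ => sq_nonneg _) hi0
    have h3 : 0 < (1 - α) * ∑ i ∈ Λ, (x i - m i) ^ 2 :=
      lt_of_lt_of_le (mul_pos (by linarith) hy)
        (mul_le_mul_of_nonneg_left hsum (by linarith))
    linarith
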